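/- Let V be a vector space over a field F with dim V = n, 2 ≤ n < ∞. Then the chromatic number of the subspace inclusion graph In(V) equals n − 1. -/

import Mathlib

/-- The vertex type of the subspace inclusion graph: nontrivial proper subspaces. -/
abbrev InVert (F V : Type*) [Field F] [AddCommGroup V] [Module F V] :=
  {W : Submodule F V // W ≠ ⊥ ∧ W ≠ ⊤}

/-- The subspace inclusion graph `In(V)`: vertices are the nontrivial proper subspaces
of `V`, two of them being adjacent iff one is properly contained in the other. -/
def inclGraph (F V : Type*) [Field F] [AddCommGroup V] [Module F V] :
    SimpleGraph (InVert F V) where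
  Adj W₁ W₂ := W₁.1 < W₂.1 ∨ W₂.1 < W₁.1
  symm := ⟨fun _ _ h => h.symm⟩
  loopless := ⟨fun _ h => h.elim (lt_irrefl _) (lt_irrefl _)⟩


/-!
Adjacent vertices have distinct dimensions, all lying in `[1, n - 1]`, so `W ↦ dim W - 1` is a
proper colouring with `n - 1` colours. Conversely, the proper nonzero members of a complete flag
`0 < V₁ < ⋯ < Vₙ₋₁ < V` form a clique of size `n - 1`.
-/

namespace InVert

variable {F V : Type*} [Field F] [AddCommGroup V] [Module F V]

theorem one_le_finrank [FiniteDimensional F V] (W : InVert F V) : 1 ≤ Module.finrank F W.1 :=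
  haveI : Nontrivial W.1 := Submodule.nontrivial_iff_ne_bot.mpr W.2.1
  Module.finrank_pos

theorem finrank_lt [FiniteDimensional F V] (W : InVert F V) :
    Module.finrank F W.1 < Module.finrank F V :=
  Submodule.finrank_lt W.2.2

end InVert

namespace inclGraph

variable {F V : Type*} [Field F] [AddCommGroup V] [Module F V]

theorem finrank_ne_of_adj [FiniteDimensional F V] {W₁ W₂ : InVert F V}
    (h : (inclGraph F V).Adj W₁ W₂) : Module.finrank F W₁.1 ≠ Module.finrank F W₂.1 := by
  rcases h with h | h
  · exact (Submodule.finrank_lt_finrank_of_lt h).ne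
  · exact (Submodule.finrank_lt_finrank_of_lt h).ne'

theorem colorable_finrank_sub_one [FiniteDimensional F V] :
    (inclGraph F V).Colorable (Module.finrank F V - 1) :=
  ⟨SimpleGraph.Coloring.mk
    (fun W => ⟨Module.finrank F W.1 - 1, by have := W.one_le_finrank; have := W.finrank_lt; omega⟩)
    fun {W₁ W₂} h => by
      have := finrank_ne_of_adj h
      have := W₁.one_le_finrank
      have := W₂.one_le_finrank
      simp only [ne_eq, Fin.mk.injEq]
      omega⟩

def innerChain {k : ℕ} {g : Fin (k + 2) → Submodule F V} (hg : StrictMono g) (i : Fin k) :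
    InVert F V :=
  ⟨g i.succ.castSucc,
    (bot_le.trans_lt (hg (Fin.castSucc_pos i.succ_pos))).ne',
    ((hg (Fin.castSucc_lt_last i.succ)).trans_le le_top).ne⟩

theorem pairwise_adj_innerChain {k : ℕ} {g : Fin (k + 2) → Submodule F V} (hg : StrictMono g) :
    Pairwise fun i j => (inclGraph F V).Adj (innerChain hg i) (innerChain hg j) := by
  intro i j hij
  rcases hij.lt_or_gt with h | h
  · exact Or.inl (hg (Fin.castSucc_lt_castSucc_iff.mpr (Fin.succ_lt_succ_iff.mpr h)))
  · exact Or.inr (hg (Fin.castSucc_lt_castSucc_iff.mpr (Fin.succ_lt_succ_iff.mpr h)))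

theorem finrank_sub_one_le_chromaticNumber [FiniteDimensional F V] :
    ((Module.finrank F V - 1 : ℕ) : ℕ∞) ≤ (inclGraph F V).chromaticNumber := by
  rcases h : Module.finrank F V with _ | k
  · simp
  · let b := (Module.finBasis F V).reindex (finCongr h)
    exact SimpleGraph.le_chromaticNumber_of_pairwise_adj (by simp) _
      (pairwise_adj_innerChain b.flag_strictMono)

end inclGraph

theorem inclGraph_chromaticNumber_general
    (F V : Type*) [Field F] [AddCommGroup V] [Module F V] [FiniteDimensional F V]
    (n : ℕ) (hn : Module.finrank F V = n) :
    (inclGraph F V).chromaticNumber = (n - 1 : ℕ) := by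
  subst hn
  exact le_antisymm inclGraph.colorable_finrank_sub_one.chromaticNumber_le
    inclGraph.finrank_sub_one_le_chromaticNumber

/-- If `dim V = n` with `2 ≤ n < ∞`, the chromatic number of the subspace inclusion
graph `In(V)` equals `n - 1`. -/
theorem inclGraph_chromaticNumber
    (F V : Type*) [Field F] [AddCommGroup V] [Module F V] [FiniteDimensional F V]
    (n : ℕ) (hn : Module.finrank F V = n) (h2 : 2 ≤ n) :
    (inclGraph F V).chromaticNumber = (n - 1 : ℕ) :=
  inclGraph_chromaticNumber_general F V n hn
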